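/- Suppose scores have differentiable densities f₊, f₋ with f₊ > 0 on the relevant range, and the ROC curve is concave (equivalently, the likelihood ratio h(t) = f₊(t)/f₋(t) is nondecreasing in t). If moreover M₊ ≥ M₋, then the PR curve y_PR(x) is nonincreasing in x on (0,1). -/

import Mathlib

open Filter Set Topology

noncomputable def quantile (F : ℝ → ℝ) (p : ℝ) : ℝ := sInf {z | p ≤ F z}

/-!
A continuous `fN` cannot change sign while `fP / fN` is monotone and `fP > 0` (near a sign change
from `≤ 0` to `> 0` the ratio would be unbounded above), so `fN > 0` and `q = fN / fP` is
antitone. For fixed `t`, the function `s ↦ fN t * FP s - fP t * FN s`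
has derivative `fP s * fN t - fP t * fN s ≥ 0` on `[t, ∞)`, so comparing its value at `t` with its
limit at `+∞` gives `1 - FN t ≤ q t * (1 - FP t)`. This is exactly the sign condition making
`φ = (1 - FN) / (1 - FP)` antitone. Substituting `x = 1 - FP t`, the PR curve is
`πP / (πP + πN * φ t)` with `t` decreasing in `x`, hence nonincreasing.
-/

section LikelihoodRatio

variable {f g : ℝ → ℝ}

lemma mul_le_mul_of_monotone_div (hg : ∀ t, 0 < g t) (hmono : Monotone fun t => f t / g t)
    {s t : ℝ} (hst : s ≤ t) : f s * g t ≤ f t * g s :=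
  (div_le_div_iff₀ (hg s) (hg t)).1 (hmono hst)

lemma pos_of_forall_lt_pos_of_monotone_div (hf : Continuous f) (hg : Continuous g)
    (hfpos : ∀ t, 0 < f t) (hmono : Monotone fun t => f t / g t) {a : ℝ}
    (ha : ∀ u, a < u → 0 < g u) : 0 < g a := by
  set r := f (a + 1) / g (a + 1)
  have hr : 0 < r := div_pos (hfpos _) (ha _ (lt_add_one a))
  have hle : ∀ᶠ u in 𝓝[>] a, f u ≤ r * g u := by
    filter_upwards [Ioc_mem_nhdsGT (lt_add_one a)] with u hu
    exact (div_le_iff₀ (ha u hu.1)).1 (hmono hu.2)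
  have hlim : f a ≤ r * g a :=
    le_of_tendsto_of_tendsto (hf.continuousAt.tendsto.mono_left nhdsWithin_le_nhds)
      (((hg.tendsto a).const_mul r).mono_left nhdsWithin_le_nhds) hle
  exact pos_of_mul_pos_right ((hfpos a).trans_le hlim) hr.le

/-- By monotonicity of the ratio, `{g ≤ 0}` lies to the left of any point where `g > 0`; its
supremum then contradicts `pos_of_forall_lt_pos_of_monotone_div`. -/
lemma pos_of_monotone_div (hf : Continuous f) (hg : Continuous g) (hfpos : ∀ t, 0 < f t)
    (hmono : Monotone fun t => f t / g t) (hex : ∃ t, 0 < g t) (t : ℝ) : 0 < g t := by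
  by_contra! ht
  obtain ⟨t₂, ht₂⟩ := hex
  have hbdd : BddAbove {u | g u ≤ 0} := ⟨t₂, fun u hu => by
    by_contra! h
    have hratio : f u / g u ≤ 0 := div_nonpos_of_nonneg_of_nonpos (hfpos u).le hu
    exact (div_pos (hfpos t₂) ht₂).not_ge ((hmono h.le).trans hratio)⟩
  have hmem : g (sSup {u | g u ≤ 0}) ≤ 0 :=
    (isClosed_le hg continuous_const).csSup_mem ⟨t, ht⟩ hbdd
  refine hmem.not_gt (pos_of_forall_lt_pos_of_monotone_div hf hg hfpos hmono fun u hu => ?_)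
  exact not_le.1 fun h => (le_csSup hbdd h).not_gt hu

end LikelihoodRatio

lemma exists_pos_of_hasDerivAt_of_tendsto {F f : ℝ → ℝ} {a b : ℝ}
    (hd : ∀ t, HasDerivAt F (f t) t) (hbot : Tendsto F atBot (𝓝 a))
    (htop : Tendsto F atTop (𝓝 b)) (hab : a < b) : ∃ t, 0 < f t := by
  by_contra! h
  have hanti : Antitone F := antitone_of_hasDerivAt_nonpos hd h
  linarith [hanti.ge_of_tendsto hbot 0, hanti.le_of_tendsto htop 0]

lemma apply_quantile_eq {F : ℝ → ℝ} (hmono : Monotone F) (hcont : Continuous F)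
    (hbot : Tendsto F atBot (𝓝 0)) (htop : Tendsto F atTop (𝓝 1)) {p : ℝ} (hp : p ∈ Ioo 0 1) :
    F (quantile F p) = p := by
  obtain ⟨a, ha⟩ := (hbot.eventually_lt_const hp.1).exists
  obtain ⟨b, hb⟩ := (htop.eventually_const_lt hp.2).exists
  obtain ⟨z, hz⟩ := mem_range_of_exists_le_of_exists_ge hcont ⟨a, ha.le⟩ ⟨b, hb.le⟩
  have hbdd : BddBelow {w | p ≤ F w} :=
    ⟨a, fun w hw => (hmono.reflect_lt (ha.trans_le hw)).le⟩
  have hmem : p ≤ F (quantile F p) :=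
    (isClosed_le continuous_const hcont).csInf_mem ⟨z, hz.ge⟩ hbdd
  exact le_antisymm ((hmono (csInf_le hbdd hz.ge)).trans_eq hz) hmem

section Survival

variable {F G f g : ℝ → ℝ}

lemma density_mul_survival_le (hF : ∀ t, HasDerivAt F (f t) t) (hG : ∀ t, HasDerivAt G (g t) t)
    (hg : ∀ t, 0 < g t) (hmono : Monotone fun t => f t / g t)
    (hFtop : Tendsto F atTop (𝓝 1)) (hGtop : Tendsto G atTop (𝓝 1)) (t : ℝ) :
    f t * (1 - G t) ≤ g t * (1 - F t) := by
  set e : ℝ → ℝ := fun s => g t * F s - f t * G s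
  have he : ∀ s, HasDerivAt e (g t * f s - f t * g s) s := fun s =>
    ((hF s).const_mul _).sub ((hG s).const_mul _)
  have he_mono : MonotoneOn e (Ici t) := by
    refine monotoneOn_of_hasDerivWithinAt_nonneg (convex_Ici t)
      (fun s _ => (he s).continuousAt.continuousWithinAt) (fun s _ => (he s).hasDerivWithinAt)
      fun s hs => ?_
    rw [interior_Ici] at hs
    linarith [mul_le_mul_of_monotone_div hg hmono (le_of_lt hs)]
  have he_lim : Tendsto e atTop (𝓝 (g t * 1 - f t * 1)) :=
    (hFtop.const_mul _).sub (hGtop.const_mul _)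
  have he_le : e t ≤ g t * 1 - f t * 1 := ge_of_tendsto he_lim <| by
    filter_upwards [eventually_ge_atTop t] with s hs
    exact he_mono self_mem_Ici hs hs
  simp only [e] at he_le
  linarith

lemma antitone_survival_div (hF : ∀ t, HasDerivAt F (f t) t) (hG : ∀ t, HasDerivAt G (g t) t)
    (hg : ∀ t, 0 < g t) (hmono : Monotone fun t => f t / g t)
    (hFtop : Tendsto F atTop (𝓝 1)) (hGtop : Tendsto G atTop (𝓝 1)) (hFlt : ∀ t, F t < 1) :
    Antitone fun t => (1 - G t) / (1 - F t) := by
  refine antitone_of_hasDerivAt_nonpos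
    (fun t => ((hG t).const_sub 1).div ((hF t).const_sub 1) (sub_ne_zero.2 (hFlt t).ne'))
    fun t => div_nonpos_of_nonpos_of_nonneg ?_ (sq_nonneg _)
  linarith [density_mul_survival_le hF hG hg hmono hFtop hGtop t]

lemma monotoneOn_survival_quantile_div (hF : StrictMono F) (hFc : Continuous F)
    (hFbot : Tendsto F atBot (𝓝 0)) (hFtop : Tendsto F atTop (𝓝 1))
    (hφ : Antitone fun t => (1 - G t) / (1 - F t)) :
    MonotoneOn (fun x => (1 - G (quantile F (1 - x))) / x) (Ioo 0 1) := by
  have hFq : ∀ x ∈ Ioo (0 : ℝ) 1, F (quantile F (1 - x)) = 1 - x := fun x hx =>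
    apply_quantile_eq hF.monotone hFc hFbot hFtop ⟨by linarith [hx.2], by linarith [hx.1]⟩
  have hφq : ∀ x ∈ Ioo (0 : ℝ) 1, (1 - G (quantile F (1 - x))) / (1 - F (quantile F (1 - x))) =
      (1 - G (quantile F (1 - x))) / x := fun x hx => by
    rw [hFq x hx, sub_sub_cancel]
  intro x₁ hx₁ x₂ hx₂ h
  have hq : quantile F (1 - x₂) ≤ quantile F (1 - x₁) :=
    hF.le_iff_le.1 (by rw [hFq x₁ hx₁, hFq x₂ hx₂]; linarith)
  exact (hφq x₁ hx₁).symm.trans_le ((hφ hq).trans_eq (hφq x₂ hx₂))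

end Survival

theorem pr_nonincreasing_of_concave_roc_general (FP FN fP fN : ℝ → ℝ)
    (hdP : ∀ t, HasDerivAt FP (fP t) t) (hdN : ∀ t, HasDerivAt FN (fN t) t)
    (hdiffP : Differentiable ℝ fP) (hdiffN : Differentiable ℝ fN)
    (hpos : ∀ t, 0 < fP t)
    (hLR : Monotone (fun t => fP t / fN t))
    (hFPtop : Tendsto FP atTop (nhds 1)) (hFPbot : Tendsto FP atBot (nhds 0))
    (hFNtop : Tendsto FN atTop (nhds 1)) (hFNbot : Tendsto FN atBot (nhds 0))
    (πP πN : ℝ) (hπ : πP ∈ Ioo (0:ℝ) 1) (hπN : πN = 1 - πP) :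
    AntitoneOn (fun x => πP / (πP + πN * ((1 - FN (quantile FP (1 - x))) / x)))
      (Ioo (0:ℝ) 1) := by
  have hfN : ∀ t, 0 < fN t := pos_of_monotone_div hdiffP.continuous hdiffN.continuous hpos hLR
    (exists_pos_of_hasDerivAt_of_tendsto hdN hFNbot hFNtop one_pos)
  have hFP : StrictMono FP := strictMono_of_hasDerivAt_pos hdP hpos
  have hFN : StrictMono FN := strictMono_of_hasDerivAt_pos hdN hfN
  have hFPlt : ∀ t, FP t < 1 := fun t =>
    (hFP (lt_add_one t)).trans_le (hFP.monotone.ge_of_tendsto hFPtop _)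
  have hgmono := monotoneOn_survival_quantile_div hFP
    (continuous_iff_continuousAt.2 fun t => (hdP t).continuousAt) hFPbot hFPtop
    (antitone_survival_div hdP hdN hfN hLR hFPtop hFNtop hFPlt)
  intro x₁ hx₁ x₂ hx₂ h
  have hπN0 : 0 ≤ πN := by rw [hπN]; linarith [hπ.2]
  have hg₁ : 0 ≤ (1 - FN (quantile FP (1 - x₁))) / x₁ :=
    div_nonneg (sub_nonneg.2 (hFN.monotone.ge_of_tendsto hFNtop _)) hx₁.1.le
  have hπP := hπ.1
  exact div_le_div_of_nonneg_left hπP.le (by positivity)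
    (add_le_add_right (mul_le_mul_of_nonneg_left (hgmono hx₁ hx₂ h) hπN0) _)

/-- If scores have differentiable densities with `fP > 0`, the ROC curve is concave
(equivalently the likelihood ratio `fP/fN` is nondecreasing), and `MP ≥ MN`, then the
PR curve is nonincreasing on (0,1). -/
theorem pr_nonincreasing_of_concave_roc (FP FN fP fN : ℝ → ℝ)
    (hdP : ∀ t, HasDerivAt FP (fP t) t) (hdN : ∀ t, HasDerivAt FN (fN t) t)
    (hdiffP : Differentiable ℝ fP) (hdiffN : Differentiable ℝ fN)
    (hpos : ∀ t, 0 < fP t)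
    (hLR : Monotone (fun t => fP t / fN t))
    (hFPtop : Tendsto FP atTop (nhds 1)) (hFPbot : Tendsto FP atBot (nhds 0))
    (hFNtop : Tendsto FN atTop (nhds 1)) (hFNbot : Tendsto FN atBot (nhds 0))
    (hMM : sSup {t | FN t < 1} ≤ sSup {t | FP t < 1})
    (πP πN : ℝ) (hπ : πP ∈ Ioo (0:ℝ) 1) (hπN : πN = 1 - πP) :
    AntitoneOn (fun x => πP / (πP + πN * ((1 - FN (quantile FP (1 - x))) / x)))
      (Ioo (0:ℝ) 1) :=
  pr_nonincreasing_of_concave_roc_general FP FN fP fN hdP hdN hdiffP hdiffN hpos hLR hFPtop hFPbot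
    hFNtop hFNbot πP πN hπ hπN
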